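/- arXiv:2509.00948 — 7 statements merged into one kernel-verified Lean document; each statement's English description precedes it below -/
import Mathlib

section
/- The range of the encoding of string sequences is exactly the regular language †(Σ*†)*: a string w over Σ ∪ {†} equals enc(s) for some string sequence s if and only if w belongs to the language {[†]} * ({v : v is a string over Σ ∪ {†} with † not occurring in v} * {[†]})⋆, where * denotes language concatenation and ⋆ denotes Kleene star. -/
open Computability

/-- The encoding of a string sequence `s = [u₀, …, u_{m−1}]` over `Σ` as the string
`† u₀ † u₁ † ⋯ † u_{m−1} †` over `Σ ∪ {†}`, modelled as `Option Σ` with `none` as `†`. -/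
def enc {σ : Type*} (s : List (List σ)) : List (Option σ) :=
  [none] ++ s.flatMap (fun u => u.map some ++ [none])

/-- The language `{[†]}` consisting of the single one-letter string `†`. -/
def sepLang (σ : Type*) : Language (Option σ) := {[none]}

/-- The language of strings over `Σ ∪ {†}` in which `†` does not occur (i.e. `Σ*`). -/
def noSepLang (σ : Type*) : Language (Option σ) := {v : List (Option σ) | none ∉ v}

theorem Language.mem_kstar_iff_exists_flatMap {α β : Type*} {l : Language α} {f : β → List α}
    (hl : ∀ y, y ∈ l ↔ ∃ b, f b = y) {x : List α} :
    x ∈ l∗ ↔ ∃ s : List β, s.flatMap f = x := by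
  rw [Language.mem_kstar]
  constructor
  · rintro ⟨L, rfl, hL⟩
    obtain ⟨s, rfl⟩ : L ∈ Set.range (List.map f) := by
      rw [Set.range_list_map]
      exact fun y hy => (hl y).1 (hL y hy)
    exact ⟨s, List.flatMap_def⟩
  · rintro ⟨s, rfl⟩
    refine ⟨s.map f, List.flatMap_def, ?_⟩
    simpa only [List.forall_mem_map, hl] using fun b _ => ⟨b, rfl⟩

theorem mem_sepLang_iff {σ : Type*} {v : List (Option σ)} : v ∈ sepLang σ ↔ v = [none] :=
  Iff.rfl

theorem mem_noSepLang_iff {σ : Type*} {v : List (Option σ)} :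
    v ∈ noSepLang σ ↔ ∃ u : List σ, u.map some = v := by
  rw [← Set.mem_range, Set.range_list_map]
  simp only [Set.mem_ofPred_eq, Set.mem_range, ← Option.ne_none_iff_exists]
  exact ⟨fun h x hx => ne_of_mem_of_not_mem hx h, fun h hn => h none hn rfl⟩

theorem mem_noSepLang_mul_sepLang_iff {σ : Type*} {v : List (Option σ)} :
    v ∈ noSepLang σ * sepLang σ ↔ ∃ u : List σ, u.map some ++ [none] = v := by
  simp only [Language.mem_mul, mem_noSepLang_iff, mem_sepLang_iff, exists_eq_left,
    exists_exists_eq_and]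

/-- The range of the encoding of string sequences is exactly the regular language
`†(Σ*†)*`: a string `w` over `Σ ∪ {†}` equals `enc s` for some string sequence `s`
iff `w ∈ {[†]} * ({v | † ∉ v} * {[†]})⋆`. -/
theorem enc_range {σ : Type*} (w : List (Option σ)) :
    (∃ s : List (List σ), enc s = w) ↔
      w ∈ sepLang σ * (noSepLang σ * sepLang σ)∗ := by
  simp only [enc, List.cons_append, List.nil_append, Language.mem_mul, mem_sepLang_iff,
    Language.mem_kstar_iff_exists_flatMap fun _ => mem_noSepLang_mul_sepLang_iff,
    exists_exists_eq_and, exists_eq_left]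
end

section
/- Block decomposition of the encoding: for every string sequence s, splitting the string enc(s) on the separator † yields the list of blocks [] :: (the elements of s, each embedded into Σ ∪ {†} via some) ++ [[]]. Formally, (enc s).splitOn none = [] :: s.map (fun u => u.map some) ++ [[]]. -/
namespace List

variable {α : Type*} [BEq α] [LawfulBEq α] {a : α} {ls : List (List α)}

theorem splitOn_flatMap_append_singleton (h : ∀ l ∈ ls, a ∉ l) :
    (ls.flatMap (· ++ [a])).splitOn a = ls ++ [[]] := by
  induction ls with
  | nil => rfl
  | cons l ls ih =>
    rw [forall_mem_cons] at h
    rw [flatMap_cons, append_assoc, singleton_append,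
      splitOn_append_cons_self_of_not_mem h.1, ih h.2, cons_append]

theorem splitOn_cons_flatMap_append_singleton (h : ∀ l ∈ ls, a ∉ l) :
    (a :: ls.flatMap (· ++ [a])).splitOn a = [] :: ls ++ [[]] := by
  rw [← nil_append (a :: _), splitOn_append_cons_self_of_not_mem not_mem_nil,
    splitOn_flatMap_append_singleton h, cons_append]

end List

theorem enc_eq_cons_flatMap {σ : Type*} (s : List (List σ)) :
    enc s = none :: (s.map (List.map some)).flatMap (· ++ [none]) := by
  rw [List.flatMap_map]
  rfl

/-- Splitting `enc s` on the separator `†` yields the blocks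
`[] :: (elements of s, embedded via some) ++ [[]]`. -/
theorem splitOn_enc {σ : Type*} [DecidableEq σ] (s : List (List σ)) :
    (enc s).splitOn none = [] :: s.map (fun u => u.map some) ++ [[]] := by
  rw [enc_eq_cons_flatMap]
  exact List.splitOn_cons_flatMap_append_singleton (by simp)
end

section
/- Correctness of the sequence-read (nth/elem) encoding: let s be a string sequence and i an index with i < length of s. Then there exist strings p and q over Σ ∪ {†} such that enc(s) = p ++ [†] ++ (the i-th element of s, embedded via some) ++ [†] ++ q and the number of occurrences of † in p equals i. Moreover this decomposition characterizes the i-th element: for any strings p, v, q over Σ ∪ {†} with † not occurring in v, if enc(s) = p ++ [†] ++ v ++ [†] ++ q and the number of occurrences of † in p equals i, then v equals the i-th element of s embedded via some. -/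
/-!
`enc s` is the list of `†`-free blocks `s.map (map some)`, each preceded and followed by `†`.
In `a ++ † :: b` with `†`-free `a`, the displayed `†` is the first one, so `a` is determined;
peeling blocks off the front this way, a decomposition `enc s = p ++ † :: v ++ † :: q` with
`†`-free `v` passes exactly `count † p` blocks before reaching `v`, which is then the next block.
-/

namespace List

variable {α : Type*}

theorem prefix_of_append_cons_eq {x : α} {a b c d : List α} (hc : x ∉ c)
    (h : a ++ x :: b = c ++ x :: d) : c <+: a := by
  rcases append_eq_append_iff.1 h with ⟨e, rfl, he⟩ | ⟨e, rfl, -⟩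
  · cases e with
    | nil => simp
    | cons y e =>
      obtain ⟨rfl, -⟩ := cons.inj he
      simp at hc
  · exact prefix_append c e

theorem eq_of_append_cons_eq {x : α} {a b c d : List α} (ha : x ∉ a) (hc : x ∉ c)
    (h : a ++ x :: b = c ++ x :: d) : a = c :=
  ((prefix_of_append_cons_eq hc h).eq_of_length
    (le_antisymm (prefix_of_append_cons_eq hc h).length_le
      (prefix_of_append_cons_eq ha h.symm).length_le)).symm

def sepJoin (x : α) (bs : List (List α)) : List α :=
  x :: bs.flatMap (· ++ [x])

@[simp]
theorem sepJoin_cons (x : α) (b : List α) (bs : List (List α)) :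
    sepJoin x (b :: bs) = x :: (b ++ sepJoin x bs) := by
  simp [sepJoin]

variable [BEq α] [LawfulBEq α] {x : α}

theorem exists_sepJoin_eq_append_getElem {bs : List (List α)} (hbs : ∀ b ∈ bs, x ∉ b) (i : ℕ)
    (hi : i < bs.length) :
    ∃ p q, sepJoin x bs = p ++ x :: (bs[i] ++ x :: q) ∧ p.count x = i := by
  induction bs generalizing i with
  | nil => simp at hi
  | cons b bs ih =>
    obtain ⟨hb, hbs⟩ := forall_mem_cons.1 hbs
    cases i with
    | zero => exact ⟨[], bs.flatMap (· ++ [x]), by simp [sepJoin], rfl⟩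
    | succ j =>
      obtain ⟨p, q, he, hc⟩ := ih hbs j (by simpa using hi)
      refine ⟨x :: (b ++ p), q, by simp [he], ?_⟩
      simp [count_append, count_eq_zero.2 hb, hc]

theorem getElem?_count_eq_of_sepJoin_eq {bs : List (List α)} (hbs : ∀ b ∈ bs, x ∉ b)
    {p v q : List α} (hv : x ∉ v) (he : sepJoin x bs = p ++ x :: (v ++ x :: q)) :
    bs[p.count x]? = some v := by
  induction bs generalizing p with
  | nil => cases p <;> simp [sepJoin] at he
  | cons b bs ih =>
    obtain ⟨hb, hbs⟩ := forall_mem_cons.1 hbs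
    rw [sepJoin_cons] at he
    cases p with
    | nil =>
      simp only [nil_append, cons.injEq, true_and, sepJoin] at he
      simp [eq_of_append_cons_eq hb hv he]
    | cons y p =>
      simp only [cons_append, cons.injEq] at he
      obtain ⟨rfl, he⟩ := he
      obtain ⟨r, rfl⟩ := prefix_of_append_cons_eq hb (by simpa [sepJoin] using he.symm)
      rw [append_assoc] at he
      simpa [count_append, count_eq_zero.2 hb] using ih hbs (append_cancel_left he)

end List

theorem enc_eq_sepJoin {σ : Type*} (s : List (List σ)) :
    enc s = List.sepJoin none (s.map (List.map some)) := by
  simp [enc, List.sepJoin, List.flatMap_map]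

/-- Correctness of the sequence-read (nth/elem) encoding: the `i`-th element of `s`
occurs in `enc s` between the `(i+1)`-th and `(i+2)`-th occurrences of `†`, and this
decomposition characterizes it. -/
theorem enc_nth {σ : Type*} [DecidableEq σ] (s : List (List σ)) (i : ℕ)
    (h : i < s.length) :
    (∃ p q : List (Option σ),
        enc s = p ++ [none] ++ (s[i]'h).map some ++ [none] ++ q ∧ p.count none = i) ∧
      (∀ p v q : List (Option σ), none ∉ v →
        enc s = p ++ [none] ++ v ++ [none] ++ q → p.count none = i →
          v = (s[i]'h).map some) := by
  have hblocks : ∀ b ∈ s.map (List.map some), (none : Option σ) ∉ b := by simp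
  constructor
  · obtain ⟨p, q, he, hc⟩ :=
      List.exists_sepJoin_eq_append_getElem hblocks i (by simpa using h)
    exact ⟨p, q, by simpa [enc_eq_sepJoin] using he, hc⟩
  · intro p v q hv he hc
    have := List.getElem?_count_eq_of_sepJoin_eq hblocks hv (by simpa [enc_eq_sepJoin] using he)
    simpa [hc, List.getElem?_eq_getElem h, eq_comm] using this
end

section
/- Correctness of the sequence-write encoding: let s be a string sequence, u a string over Σ, and i an index with i < length of s. Then there exist strings p and q over Σ ∪ {†} such that enc(s) = p ++ (the i-th element of s, embedded via some) ++ q, enc(s with its i-th element replaced by u) = p ++ (u embedded via some) ++ q, and the number of occurrences of † in p equals i + 1. -/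
theorem enc_append_cons {σ : Type*} (l₁ l₂ : List (List σ)) (u : List σ) :
    enc (l₁ ++ u :: l₂) = enc l₁ ++ u.map some ++ enc l₂ := by
  simp [enc]

theorem count_none_enc {σ : Type*} [DecidableEq σ] (s : List (List σ)) :
    (enc s).count none = s.length + 1 := by
  induction s with
  | nil => rfl
  | cons u s ih =>
    have henc : enc (u :: s) = none :: u.map some ++ enc s := by simp [enc]
    simp [henc, List.count_append, ih, List.count_eq_zero_of_not_mem]

/-- Correctness of the sequence-write encoding: writing `u` at position `i` replaces
the block of `enc s` strictly between the `(i+1)`-th and `(i+2)`-th occurrences of `†`. -/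
theorem enc_write {σ : Type*} [DecidableEq σ] (s : List (List σ)) (u : List σ) (i : ℕ)
    (h : i < s.length) :
    ∃ p q : List (Option σ),
      enc s = p ++ (s[i]'h).map some ++ q ∧
        enc (s.set i u) = p ++ u.map some ++ q ∧
          p.count none = i + 1 := by
  refine ⟨enc (s.take i), enc (s.drop (i + 1)), ?_, ?_, ?_⟩
  · rw [← enc_append_cons, List.getElem_cons_drop, List.take_append_drop]
  · rw [List.set_eq_take_cons_drop u h, enc_append_cons]
  · rw [count_none_enc, List.length_take_of_le h.le]
end

section
/- Correctness of the subsequence encoding: let s be a string sequence and i, j natural numbers with i + j ≤ length of s. Then there exist strings p and q over Σ ∪ {†} such that enc(s) = p ++ enc((s with its first i elements dropped), truncated to its first j elements) ++ q, the number of occurrences of † in p equals i, and the number of occurrences of † in q equals (length of s) − i − j. -/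
/-!
Split `s` as `s.take i ++ t ++ r` with `t = (s.drop i).take j`. Each string of `s.take i` is
emitted as the block `† u`, and each string of `r` as the block `u †`; every block carries
exactly one `†`, and what remains between the two groups of blocks is `enc t`.
-/

section

variable {σ : Type*}

theorem enc_cons (u : List σ) (s : List (List σ)) :
    enc (u :: s) = none :: u.map some ++ enc s := by
  simp [enc]

theorem enc_append (a b : List (List σ)) :
    enc (a ++ b) = a.flatMap (fun u => none :: u.map some) ++ enc b := by
  induction a with
  | nil => rfl
  | cons u a ih => simp [enc_cons, ih]

theorem enc_append' (a b : List (List σ)) :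
    enc (a ++ b) = enc a ++ b.flatMap (fun u => u.map some ++ [none]) := by
  simp [enc]

variable [DecidableEq σ]

@[simp]
theorem count_none_map_some (u : List σ) : (u.map some).count none = 0 :=
  List.count_eq_zero.2 (by simp)

theorem count_none_flatMap_sep_map_some (l : List (List σ)) :
    (l.flatMap fun u => none :: u.map some).count none = l.length := by
  simp [List.count_flatMap, Function.comp_def]

theorem count_none_flatMap_map_some_sep (l : List (List σ)) :
    (l.flatMap fun u => u.map some ++ [none]).count none = l.length := by
  simp [List.count_flatMap, Function.comp_def, List.count_append]

end

/-- Correctness of the subsequence encoding: `enc ((s.drop i).take j)` occurs in `enc s`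
with `i` separators before it and `s.length − i − j` separators after it. -/
theorem enc_subseq {σ : Type*} [DecidableEq σ] (s : List (List σ)) (i j : ℕ)
    (h : i + j ≤ s.length) :
    ∃ p q : List (Option σ),
      enc s = p ++ enc ((s.drop i).take j) ++ q ∧
        p.count none = i ∧ q.count none = s.length - i - j := by
  refine ⟨(s.take i).flatMap (fun u => none :: u.map some),
    ((s.drop i).drop j).flatMap (fun u => u.map some ++ [none]), ?_, ?_, ?_⟩
  · conv_lhs => rw [← List.take_append_drop i s, ← List.take_append_drop j (s.drop i)]
    rw [enc_append, enc_append', List.append_assoc]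
  · rw [count_none_flatMap_sep_map_some, List.length_take]
    omega
  · rw [count_none_flatMap_map_some_sep, List.length_drop, List.length_drop]
end

section
/- Correctness of the join encoding: let s be a string sequence and v a string over Σ. Removing the first and the last letter of enc(s) and then replacing every remaining occurrence of † by v (and every letter some a by a) yields exactly join_v(s) = List.intercalate v s. Formally, ((enc s).dropLast.tail).flatMap (fun x => match x with | none => v | some a => [a]) = List.intercalate v s. -/
/-!
`enc s` with its first and last letter removed is `[†].intercalate (s.map (map some))`, and
substituting strings for letters (`flatMap`) is a monoid homomorphism, so it commutes with
`intercalate`; it sends `†` to `v` and undoes `map some` on each `uᵢ`.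
-/

namespace List

variable {α β : Type*}

theorem dropLast_flatMap_append_singleton (s : List (List α)) (x : α) :
    (s.flatMap (· ++ [x])).dropLast = [x].intercalate s := by
  induction s with
  | nil => rfl
  | cons u t ih =>
    cases t with
    | nil => simp
    | cons w t =>
      rw [flatMap_cons, dropLast_append_of_ne_nil (by simp), ih, intercalate_cons_cons,
        append_assoc]

theorem flatMap_intercalate (f : α → List β) (sep : List α) (s : List (List α)) :
    (sep.intercalate s).flatMap f = (sep.flatMap f).intercalate (s.map (·.flatMap f)) := by
  induction s with
  | nil => rfl
  | cons u t ih =>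
    cases t with
    | nil => simp
    | cons w t => simp only [intercalate_cons_cons, flatMap_append, ih, map_cons]

end List

/-- Correctness of the join encoding: dropping the first and last letters of `enc s`
and substituting `v` for each remaining `†` yields `join_v(s) = List.intercalate v s`. -/
theorem enc_join {σ : Type*} (s : List (List σ)) (v : List σ) :
    ((enc s).dropLast.tail).flatMap
        (fun x => match x with | none => v | some a => [a]) =
      List.intercalate v s := by
  have hbody : (enc s).dropLast.tail = [none].intercalate (s.map (List.map some)) := by
    rw [List.tail_dropLast, enc, List.singleton_append, List.tail_cons,
      ← List.flatMap_map (List.map some) (· ++ [none]), List.dropLast_flatMap_append_singleton]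
  have hdecode (u : List σ) :
      (u.map some).flatMap (fun x => match x with | none => v | some a => [a]) = u := by
    simp [List.flatMap_map]
  rw [hbody, List.flatMap_intercalate, List.map_map]
  simp [Function.comp_def, hdecode]
end

section
/- Correctness of the split encoding for a single-letter delimiter: let u be a string over Σ and d ∈ Σ a letter. Then the encoding of the sequence obtained by splitting u on d equals the string obtained from u by replacing every occurrence of d by † (and keeping all other letters), wrapped with one † at the front and one † at the back. Formally, enc (u.splitOn d) = none :: u.map (fun a => if a = d then none else some a) ++ [none]. -/
namespace List

variable {α β : Type*}

theorem flatMap_modifyHead_cons_map_append {l : List (List α)} (hl : l ≠ []) (f : α → β)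
    (b : List β) (x : α) :
    (l.modifyHead (x :: ·)).flatMap (fun v => v.map f ++ b) =
      f x :: l.flatMap (fun v => v.map f ++ b) := by
  obtain ⟨v, l, rfl⟩ := exists_cons_of_ne_nil hl
  rfl

theorem flatMap_splitOnP_map_append_singleton (p : α → Bool) (f : α → β) (b : β)
    (u : List α) :
    (u.splitOnP p).flatMap (fun v => v.map f ++ [b]) =
      u.map (fun a => if p a then b else f a) ++ [b] := by
  induction u with
  | nil => simp
  | cons x xs ih =>
    by_cases hx : p x
    · simp [splitOnP_cons_eq_if_modifyHead, hx, ih]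
    · simp [splitOnP_cons_eq_if_modifyHead, hx, ih,
        flatMap_modifyHead_cons_map_append (splitOnP_ne_nil p xs)]

end List

/-- Correctness of the split encoding for a single-letter delimiter `d`:
`enc (u.splitOn d)` is obtained from `u` by replacing every `d` with `†` and wrapping
with a `†` at each end. -/
theorem enc_splitOn {σ : Type*} [DecidableEq σ] (u : List σ) (d : σ) :
    enc (u.splitOn d) =
      none :: u.map (fun a => if a = d then none else some a) ++ [none] := by
  rw [enc, List.splitOn, List.flatMap_splitOnP_map_append_singleton]
  simp
end
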